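/- Let g ≥ 0, m ≥ 1, n ≥ 2, r ≥ 2, g₀ ≥ 0, s ≥ 0 be integers and n₁,...,n_s positive divisors of n with each nⱼ ≥ 1. Suppose (2 - 2(g - m))/n = 2 - 2g₀ + 2r(1/n - 1) + Σⱼ(1/nⱼ - 1). Then n ≤ (g - m + r - 1)/(r - 1). -/
import Mathlib


/-- Degree bound for `(r,k)`-permuting roots with `r ≥ 2`: if the
Riemann–Hurwitz equation of a nonseparating permuting `(n,2r,2k)`-data set
of genus `g - m` holds, then `n ≤ (g - m + r - 1)/(r - 1)`. -/
theorem stmt3 (g m n r g₀ s : ℕ) (hm : 1 ≤ m) (hn : 2 ≤ n) (hr : 2 ≤ r)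
    (nj : Fin s → ℕ) (hnj : ∀ j, nj j ∣ n) (hpos : ∀ j, 1 ≤ nj j)
    (hg : (2 - 2 * ((g : ℚ) - (m : ℚ))) / (n : ℚ) =
      2 - 2 * (g₀ : ℚ) + 2 * (r : ℚ) * (1 / (n : ℚ) - 1)
        + ∑ j, (1 / (nj j : ℚ) - 1)) :
    (n : ℚ) ≤ ((g : ℚ) - (m : ℚ) + (r : ℚ) - 1) / ((r : ℚ) - 1) := by
  have hn0 : (0:ℚ) < n := by
    have : (2:ℚ) ≤ n := by exact_mod_cast hn
    linarith
  have hr2 : (2:ℚ) ≤ r := by exact_mod_cast hr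
  have hg0 : (0:ℚ) ≤ g₀ := Nat.cast_nonneg _
  have hs : ∑ j, (1 / (nj j : ℚ) - 1) ≤ 0 := by
    apply Finset.sum_nonpos
    intro j _
    have h1 : (1:ℚ) ≤ nj j := by exact_mod_cast hpos j
    have : 1 / (nj j : ℚ) ≤ 1 := by
      rw [div_le_one (by linarith)]; exact h1
    linarith
  have key : (2 - 2 * ((g : ℚ) - (m : ℚ))) / (n : ℚ) ≤
      2 + 2 * (r : ℚ) * (1 / (n : ℚ) - 1) := by rw [hg]; linarith
  have key2 : 2 - 2 * ((g : ℚ) - (m : ℚ)) ≤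
      (2 + 2 * (r : ℚ) * (1 / (n : ℚ) - 1)) * n := (div_le_iff₀ hn0).1 key
  have hc : (1 / (n : ℚ)) * n = 1 := one_div_mul_cancel hn0.ne'
  rw [le_div_iff₀ (by linarith : (0:ℚ) < (r:ℚ) - 1)]
  nlinarith [key2, hc, mul_le_mul_of_nonneg_left hn0.le (by linarith : (0:ℚ) ≤ 2*(r:ℚ) - 2)]
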